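/- Let d ≥ 3 and 1 ≤ k ≤ ⌈(d−2)/2⌉ be integers, let p be an IDF prime for (d,k), and let α, β be rational numbers. Then: (a) if f^n_{α,β}(0) = 0 for some integer n ≥ 1, then at least one of α, β is p-integral; (b) if f^m_{α,β}(1) = 1 for some integer m ≥ 1 and β is p-integral, then α is p-integral as well. -/

import Mathlib

open Finset Function

/-- The coefficient `b_i` of `z^(d-i)` in the normalized dynamical Belyi polynomial
`B_{d,k}`. -/
def belyiCoeff (d k i : ℕ) : ℚ :=
  ((-1 : ℚ) ^ (k - i) / ((k - i).factorial * i.factorial)) *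
    ∏ j ∈ (Finset.range (k + 1)).erase i, ((d : ℚ) - (j : ℚ))

/-- The normalized dynamical Belyi polynomial `B_{d,k}` as a function on `ℚ`. -/
def belyi (d k : ℕ) (z : ℚ) : ℚ :=
  ∑ i ∈ Finset.range (k + 1), belyiCoeff d k i * z ^ (d - i)

/-- The map `f_{a,c}(z) = a · B_{d,k}(z) + c`. -/
def belyiMap (d k : ℕ) (a c z : ℚ) : ℚ := a * belyi d k z + c

/-- `p` is an index divisor free (IDF) prime for the pair `(d,k)`:
`p` is a prime with `p > k`, `p ∣ d - r` for some `r ≤ k`, and `r ∤ v_p(d-r)`. -/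
def IsIDFPrime (d k p : ℕ) : Prop :=
  p.Prime ∧ k < p ∧ ∃ r ≤ k, p ∣ (d - r) ∧ ¬ (r ∣ padicValNat p (d - r))

/-- A rational number is `p`-integral if it is zero or has nonnegative `p`-adic valuation. -/
def PIntegral (p : ℕ) (x : ℚ) : Prop := x = 0 ∨ 0 ≤ padicValRat p x

/-!
Let `r ≤ k` be the index with `p ∣ d - r`, and let `V = v_p(z) < 0`. In
`B_{d,k}(z) = ∑ b_i z^(d-i)` the coefficient `b_r` is a `p`-adic unit, while every other `b_i`
has valuation exactly `E = v_p(d-r)` (the factorials and the other `d - j` are prime to `p`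
since `p > k`). So the term of smallest valuation is `b₀ z^d`, of valuation `E + dV`, or
`b_r z^(d-r)`, of valuation `(d-r)V`, and these differ because `r ∤ E`. Hence
`v_p(B(z)) ≤ (d-r)V < V`, as `d - r ≥ p ≥ 2`. Consequently, for `v_p(α) ≤ 0`, the map
`f = αB + β` preserves `{z ≠ 0 : v_p(z) ≤ t}` whenever `t < 0` and `t ≤ v_p(β)` (or `β = 0`).
If neither `α` nor `β` is `p`-integral, the orbit of `0` enters this set (with `t = v_p(β)`) at
`f(0) = β`, so it never returns to `0`; if `β` is `p`-integral but `α` is not, the orbit of `1`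
enters it (with `t = v_p(α)`) at `f(1) = α + β`, so it never returns to `1`.
-/

namespace Rat

variable {p : ℕ} [Fact p.Prime]

theorem padicValuation_of_ne_zero {x : ℚ} (hx : x ≠ 0) :
    padicValuation p x = WithZero.exp (-padicValRat p x) := by
  simp [padicValuation, hx]

theorem padicValuation_lt_padicValuation_iff {x y : ℚ} (hx : x ≠ 0) :
    padicValuation p y < padicValuation p x ↔ (y ≠ 0 → padicValRat p x < padicValRat p y) := by
  rcases eq_or_ne y 0 with rfl | hy
  · simp [padicValuation_of_ne_zero hx, zero_lt_iff]
  · simp only [padicValuation_of_ne_zero hx, padicValuation_of_ne_zero hy, WithZero.exp_lt_exp,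
      neg_lt_neg_iff, ne_eq, hy, not_false_eq_true, forall_const]

theorem padicValRat_eq_of_padicValuation_eq {x y : ℚ} (hx : x ≠ 0)
    (h : padicValuation p y = padicValuation p x) : y ≠ 0 ∧ padicValRat p y = padicValRat p x := by
  have hy : y ≠ 0 := (padicValuation p).ne_zero_iff.1 (h ▸ (padicValuation p).ne_zero_iff.2 hx)
  refine ⟨hy, ?_⟩
  simpa only [padicValuation_of_ne_zero hx, padicValuation_of_ne_zero hy, WithZero.exp_inj,
    neg_inj] using h

end Rat

namespace padicValRat

variable {p : ℕ} [Fact p.Prime]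

theorem add_eq_left_of_lt {x y : ℚ} (hx : x ≠ 0)
    (h : y ≠ 0 → padicValRat p x < padicValRat p y) :
    x + y ≠ 0 ∧ padicValRat p (x + y) = padicValRat p x :=
  Rat.padicValRat_eq_of_padicValuation_eq hx <| (Rat.padicValuation p).map_add_eq_of_lt_left <|
    (Rat.padicValuation_lt_padicValuation_iff hx).2 h

theorem sum_eq_of_lt {ι : Type*} [DecidableEq ι] {s : Finset ι} {f : ι → ℚ} {j : ι} (hj : j ∈ s)
    (hfj : f j ≠ 0) (h : ∀ i ∈ s, i ≠ j → f i ≠ 0 → padicValRat p (f j) < padicValRat p (f i)) :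
    ∑ i ∈ s, f i ≠ 0 ∧ padicValRat p (∑ i ∈ s, f i) = padicValRat p (f j) :=
  Rat.padicValRat_eq_of_padicValuation_eq hfj <| (Rat.padicValuation p).map_sum_eq_of_lt hj
    fun i hi ↦ (Rat.padicValuation_lt_padicValuation_iff hfj).2 <|
      h i (mem_sdiff.1 hi).1 (by simpa using (mem_sdiff.1 hi).2)

theorem prod {ι : Type*} {s : Finset ι} {f : ι → ℚ} (hf : ∀ i ∈ s, f i ≠ 0) :
    padicValRat p (∏ i ∈ s, f i) = ∑ i ∈ s, padicValRat p (f i) := by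
  induction s using Finset.cons_induction with
  | empty => simp
  | cons a s _ ih =>
    rw [prod_cons, sum_cons, padicValRat.mul (hf a (mem_cons_self a s))
      (prod_ne_zero_iff.2 fun i hi ↦ hf i (mem_cons_of_mem hi)),
      ih fun i hi ↦ hf i (mem_cons_of_mem hi)]

end padicValRat

open Nat in
theorem prod_erase_range_natCast_sub {i k : ℕ} (hik : i ≤ k) :
    ∏ j ∈ (range (k + 1)).erase i, ((i : ℚ) - j) = (-1) ^ (k - i) * (k - i)! * i ! := by
  induction k, hik using Nat.le_induction with
  | base =>
    rw [range_add_one, erase_insert notMem_range_self, prod_range_natCast_sub,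
      ← descFactorial_eq_prod_range, descFactorial_self]
    simp
  | succ k hik ih =>
    rw [range_add_one, erase_insert_of_ne (by omega), prod_insert (by simp), ih,
      show k + 1 - i = k - i + 1 by omega, factorial_succ]
    push_cast [Nat.cast_sub hik]
    ring

theorem belyiCoeff_eq_eval_basis {d k i : ℕ} (hik : i ≤ k) :
    belyiCoeff d k i = (Lagrange.basis (range (k + 1)) (Nat.cast : ℕ → ℚ) i).eval (d : ℚ) := by
  simp only [Lagrange.basis, Lagrange.basisDivisor, Polynomial.eval_prod, Polynomial.eval_mul,
    Polynomial.eval_C, Polynomial.eval_sub, Polynomial.eval_X]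
  rw [prod_mul_distrib, prod_inv_distrib, prod_erase_range_natCast_sub hik, belyiCoeff]
  congr 1
  rw [div_eq_mul_inv, mul_inv, mul_inv, mul_inv ((-1 : ℚ) ^ _), ← inv_pow, inv_neg, inv_one,
    mul_assoc]

theorem belyi_one (d k : ℕ) : belyi d k 1 = 1 := by
  have hsum := congrArg (Polynomial.eval (d : ℚ))
    (Lagrange.sum_basis (s := range (k + 1)) Nat.cast_injective.injOn ⟨0, by simp⟩)
  rw [Polynomial.eval_finsetSum, Polynomial.eval_one] at hsum
  refine (sum_congr rfl fun i hi ↦ ?_).trans hsum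
  rw [one_pow, mul_one, belyiCoeff_eq_eval_basis (Nat.lt_succ_iff.1 (mem_range.1 hi))]

theorem belyi_zero {d k : ℕ} (hkd : k < d) : belyi d k 0 = 0 :=
  sum_eq_zero fun i hi ↦ by
    rw [zero_pow (by have := mem_range.1 hi; omega), mul_zero]

theorem belyiCoeff_ne_zero {d k : ℕ} (hkd : k < d) (i : ℕ) : belyiCoeff d k i ≠ 0 := by
  refine mul_ne_zero (by positivity) (prod_ne_zero_iff.2 fun j hj ↦ sub_ne_zero.2 ?_)
  have := mem_range.1 (mem_of_mem_erase hj)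
  exact_mod_cast (show j ≠ d by omega).symm

theorem eq_of_dvd_sub_of_dvd_sub {p d r j : ℕ} (hr : r < p) (hj : j < p) (hrd : r ≤ d)
    (hjd : j ≤ d) (hpr : p ∣ d - r) (hpj : p ∣ d - j) : j = r := by
  zify [hrd, hjd] at hpr hpj
  have := Int.eq_zero_of_abs_lt_dvd (dvd_sub hpr hpj) (by rw [abs_lt]; omega)
  omega

open Nat in
theorem padicValRat_belyiCoeff {d k p r i : ℕ} [hp : Fact p.Prime] (hkp : k < p) (hkd : k < d)
    (hrk : r ≤ k) (hpr : p ∣ d - r) (hik : i ≤ k) :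
    padicValRat p (belyiCoeff d k i) = if i = r then 0 else (padicValNat p (d - r) : ℤ) := by
  have hfact : padicValRat p ((k - i)! * i ! : ℚ) = 0 := by
    rw [← Nat.cast_mul, padicValRat.of_nat, Nat.cast_eq_zero]
    refine padicValNat.eq_zero_of_not_dvd fun h ↦ ?_
    rcases hp.out.dvd_mul.1 h with h | h <;> have := hp.out.dvd_factorial.1 h <;> omega
  have hnode : ∀ j ∈ (range (k + 1)).erase i,
      padicValRat p ((d : ℚ) - j) = if j = r then (padicValNat p (d - r) : ℤ) else 0 := by
    intro j hj
    have hjk := Nat.lt_succ_iff.1 (mem_range.1 (mem_of_mem_erase hj))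
    rw [← Nat.cast_sub (by omega), padicValRat.of_nat]
    split_ifs with hjr
    · rw [hjr]
    · exact_mod_cast padicValNat.eq_zero_of_not_dvd fun hpj ↦
        hjr (eq_of_dvd_sub_of_dvd_sub (by omega) (by omega) (by omega) (by omega) hpr hpj)
  have hne := belyiCoeff_ne_zero hkd i
  rw [belyiCoeff, mul_ne_zero_iff] at hne
  rw [belyiCoeff, padicValRat.mul hne.1 hne.2, padicValRat.div (div_ne_zero_iff.1 hne.1).1
    (div_ne_zero_iff.1 hne.1).2, hfact, padicValRat.pow _, padicValRat.neg, padicValRat.one,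
    padicValRat.prod (prod_ne_zero_iff.1 hne.2), sum_congr rfl hnode, sum_ite_eq']
  simp [eq_comm, hrk]

theorem padicValRat_belyi_of_neg {d k p r : ℕ} [Fact p.Prime] (hkp : k < p) (hkd : k < d)
    (hrk : r ≤ k) (hpr : p ∣ d - r) (hr : ¬ r ∣ padicValNat p (d - r)) {z : ℚ} (hz : z ≠ 0)
    (hzv : padicValRat p z < 0) :
    belyi d k z ≠ 0 ∧ padicValRat p (belyi d k z) =
      min (padicValNat p (d - r) + d * padicValRat p z) ((d - r) * padicValRat p z) := by
  set V := padicValRat p z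
  set E := ((padicValNat p (d - r) : ℕ) : ℤ)
  set v : ℕ → ℤ := fun i ↦ (if i = r then 0 else E) + (d - i) * V
  have hterm : ∀ i ∈ range (k + 1), belyiCoeff d k i * z ^ (d - i) ≠ 0 ∧
      padicValRat p (belyiCoeff d k i * z ^ (d - i)) = v i := by
    intro i hi
    have hik := Nat.lt_succ_iff.1 (mem_range.1 hi)
    refine ⟨mul_ne_zero (belyiCoeff_ne_zero hkd i) (pow_ne_zero _ hz), ?_⟩
    rw [padicValRat.mul (belyiCoeff_ne_zero hkd i) (pow_ne_zero _ hz), padicValRat.pow _,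
      padicValRat_belyiCoeff hkp hkd hrk hpr hik, Nat.cast_sub (by omega)]
  have hdom : ∀ j ∈ range (k + 1), (∀ i ∈ range (k + 1), i ≠ j → v j < v i) →
      belyi d k z ≠ 0 ∧ padicValRat p (belyi d k z) = v j := fun j hj h ↦ by
    rw [← (hterm j hj).2]
    exact padicValRat.sum_eq_of_lt hj (hterm j hj).1 fun i hi hij _ ↦ by
      rw [(hterm j hj).2, (hterm i hi).2]
      exact h i hi hij
  rcases lt_trichotomy (E + d * V) ((d - r) * V) with h | h | h
  · have hr0 : r ≠ 0 := by rintro rfl; simp at h; omega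
    refine (hdom 0 (by simp) fun i hi hi0 ↦ ?_).imp_right (·.trans ?_)
    · have : (1 : ℤ) ≤ i := by exact_mod_cast Nat.one_le_iff_ne_zero.2 hi0
      simp only [v, if_neg (Ne.symm hr0)]
      split_ifs with hir
      · subst hir; push_cast; linarith
      · push_cast; nlinarith
    · simp [v, Ne.symm hr0, h.le]
  · exact absurd (Int.natCast_dvd_natCast.1 ⟨-V, by linarith⟩) hr
  · refine (hdom r (mem_range.2 (by omega)) fun i hi hir ↦ ?_).imp_right (·.trans ?_)
    · simp only [v, if_neg hir, ↓reduceIte]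
      nlinarith [(Nat.cast_nonneg i : (0 : ℤ) ≤ i)]
    · simp [v, h.le]

theorem IsIDFPrime.lt {d k p : ℕ} (hp : IsIDFPrime d k p) : k < d := by
  obtain ⟨hp, hkp, r, hrk, hpr, hr⟩ := hp
  have hdr : d - r ≠ 0 := fun h ↦ hr (by simp [h])
  have := Nat.le_of_dvd (Nat.pos_of_ne_zero hdr) hpr
  omega

theorem IsIDFPrime.padicValRat_belyi_lt {d k p : ℕ} (hp : IsIDFPrime d k p) {z : ℚ} (hz : z ≠ 0)
    (hzv : padicValRat p z < 0) :
    belyi d k z ≠ 0 ∧ padicValRat p (belyi d k z) < padicValRat p z := by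
  have hkd := hp.lt
  obtain ⟨hp, hkp, r, hrk, hpr, hr⟩ := hp
  have := Fact.mk hp
  have hdr : (2 : ℤ) ≤ d - r := by
    have := Nat.le_of_dvd (by omega) hpr
    have := hp.two_le
    omega
  obtain ⟨hne, hv⟩ := padicValRat_belyi_of_neg hkp hkd hrk hpr hr hz hzv
  refine ⟨hne, hv ▸ (min_le_right _ _).trans_lt ?_⟩
  nlinarith

theorem mapsTo_affine_of_padicValRat_lt {p : ℕ} [Fact p.Prime] {B : ℚ → ℚ}
    (hB : ∀ z ≠ 0, padicValRat p z < 0 → B z ≠ 0 ∧ padicValRat p (B z) < padicValRat p z)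
    {α β : ℚ} {t : ℤ} (hα : α ≠ 0) (hαv : padicValRat p α ≤ 0) (ht : t < 0)
    (hβ : β ≠ 0 → t ≤ padicValRat p β) :
    Set.MapsTo (fun z ↦ α * B z + β) {z | z ≠ 0 ∧ padicValRat p z ≤ t}
      {z | z ≠ 0 ∧ padicValRat p z ≤ t} := by
  rintro z ⟨hz, hzt⟩
  obtain ⟨hBz, hBv⟩ := hB z hz (hzt.trans_lt ht)
  have hαB : padicValRat p (α * B z) < t := by
    rw [padicValRat.mul hα hBz]
    linarith
  obtain ⟨hne, hv⟩ := padicValRat.add_eq_left_of_lt (mul_ne_zero hα hBz)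
    fun hβ0 ↦ hαB.trans_le (hβ hβ0)
  exact ⟨hne, hv ▸ hαB.le⟩

theorem Set.MapsTo.iterate_mem {α : Type*} {f : α → α} {s : Set α} (h : MapsTo f s s) {x : α}
    (hx : f x ∈ s) {n : ℕ} (hn : 1 ≤ n) : f^[n] x ∈ s := by
  obtain ⟨n, rfl⟩ := Nat.exists_eq_add_of_le' hn
  rw [iterate_succ_apply]
  exact h.iterate n hx

theorem not_pIntegral_iff {p : ℕ} {x : ℚ} : ¬ PIntegral p x ↔ x ≠ 0 ∧ padicValRat p x < 0 := by
  simp [PIntegral, not_or]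

theorem pIntegral_of_periodic_critical_point_general (d k p : ℕ) (hp : IsIDFPrime d k p) (α β : ℚ) :
    ((∃ n : ℕ, 1 ≤ n ∧ (belyiMap d k α β)^[n] 0 = 0) →
      PIntegral p α ∨ PIntegral p β) ∧
    ((∃ m : ℕ, 1 ≤ m ∧ (belyiMap d k α β)^[m] 1 = 1) →
      PIntegral p β → PIntegral p α) := by
  have := Fact.mk hp.1
  have hB (z : ℚ) (hz : z ≠ 0) := hp.padicValRat_belyi_lt hz
  refine ⟨fun ⟨n, hn, h0⟩ ↦ ?_, fun ⟨m, hm, h1⟩ hβ ↦ ?_⟩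
  · by_contra! h
    obtain ⟨⟨hα, hαv⟩, hβ, hβv⟩ := h.imp not_pIntegral_iff.1 not_pIntegral_iff.1
    have hS : Set.MapsTo (belyiMap d k α β) _ _ :=
      mapsTo_affine_of_padicValRat_lt hB hα hαv.le hβv fun _ ↦ le_rfl
    have hf0 : belyiMap d k α β 0 = β := by simp [belyiMap, belyi_zero hp.lt]
    exact (hS.iterate_mem (by rw [hf0]; exact ⟨hβ, le_rfl⟩) hn).1 h0
  · by_contra hα
    obtain ⟨hα, hαv⟩ := not_pIntegral_iff.1 hα
    have hαβ (hβ0 : β ≠ 0) : padicValRat p α < padicValRat p β :=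
      hαv.trans_le (hβ.resolve_left hβ0)
    have hS : Set.MapsTo (belyiMap d k α β) _ _ :=
      mapsTo_affine_of_padicValRat_lt hB hα hαv.le hαv fun hβ0 ↦ (hαβ hβ0).le
    have hf1 : belyiMap d k α β 1 = α + β := by simp [belyiMap, belyi_one]
    have hv := (hS.iterate_mem (hf1 ▸ (padicValRat.add_eq_left_of_lt hα hαβ).imp_right le_of_eq)
      hm).2
    rw [h1, padicValRat.one] at hv
    omega

/-- If `0` is periodic then at least one of `α, β` is `p`-integral; if
`1` is periodic and `β` is `p`-integral, then so is `α`. -/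
theorem pIntegral_of_periodic_critical_point (d k p : ℕ) (hd : 3 ≤ d) (hk1 : 1 ≤ k)
    (hk2 : k ≤ (d - 1) / 2) (hp : IsIDFPrime d k p) (α β : ℚ) :
    ((∃ n : ℕ, 1 ≤ n ∧ (belyiMap d k α β)^[n] 0 = 0) →
      PIntegral p α ∨ PIntegral p β) ∧
    ((∃ m : ℕ, 1 ≤ m ∧ (belyiMap d k α β)^[m] 1 = 1) →
      PIntegral p β → PIntegral p α) :=
  pIntegral_of_periodic_critical_point_general d k p hp α β
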